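/- arXiv:2306.15743 — 2 statements merged into one kernel-verified Lean document; each statement's English description precedes it below -/
import Mathlib

section
/- Every strongly connected finite tournament on at least 3 vertices contains a Hamiltonian cycle (Moon's theorem, the special case used for ordering transactions within a Condorcet cycle/strongly connected component). -/
/-!
Moon's theorem, by growing a cycle `C` until it is Hamiltonian. Strong connectivity supplies a
first cycle, of length 3 (a single vertex is no cycle: loops `r v v` are unconstrained). If a
vertex `u` outside `C` has both an in-neighbour and an out-neighbour on `C`, then walking around
`C` from an in-neighbour one meets consecutive vertices `p → q` with `p → u → q`, and `u` is
inserted between them. Otherwise every outside vertex is either dominated by all of `C` or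
dominates all of `C`. A walk leaving `C` ends its first step at a dominated vertex, and a walk from
there back to `C` leaves the dominated vertices along an edge `c → d` into a dominating one; then
`C` followed by `c, d` is a cycle.
-/

open List

theorem Relation.ReflTransGen.exists_rel_crossing {V : Type*} {r : V → V → Prop} {p : V → Prop}
    {u v : V} (h : Relation.ReflTransGen r u v) (hu : p u) (hv : ¬ p v) :
    ∃ a b, p a ∧ ¬ p b ∧ r a b := by
  induction h with
  | refl => exact absurd hu hv
  | @tail b c _ hbc ih =>
    by_cases hb : p b
    · exact ⟨b, c, hb, hv, hbc⟩
    · exact ih hb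

theorem Cycle.exists_eq_cons_of_mem {α : Type*} {s : Cycle α} {x : α} (hx : x ∈ s) :
    ∃ t : List α, s = ↑(x :: t) := by
  induction s with
  | nil => exact absurd hx (Cycle.notMem_nil x)
  | cons a l _ =>
    obtain ⟨l₁, l₂, hl⟩ := List.append_of_mem (Cycle.mem_coe_iff.1 hx)
    exact ⟨l₂ ++ l₁, by rw [hl, Cycle.coe_eq_coe, ← cons_append]; exact isRotated_append⟩

theorem Cycle.chain_coe_iff_isChain {α : Type*} {r : α → α → Prop} (l : List α) :
    Cycle.Chain r l ↔ IsChain r (l ++ l.take 1) := by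
  cases l with
  | nil => simp
  | cons => rfl

theorem Cycle.exists_mem_of_ne_nil {α : Type*} {s : Cycle α} (hs : s ≠ Cycle.nil) : ∃ a, a ∈ s := by
  induction s with
  | nil => exact absurd rfl hs
  | cons a l _ => exact ⟨a, Cycle.mem_coe_iff.2 mem_cons_self⟩

theorem Cycle.Nodup.length_le_card {α : Type*} [Fintype α] {s : Cycle α} (hs : s.Nodup) :
    s.length ≤ Fintype.card α := by
  induction s with
  | nil => simp
  | cons a l _ => exact (Cycle.nodup_coe_iff.1 hs).length_le_card

theorem Cycle.exists_nodup_chain_length_add_two {α : Type*} {r : α → α → Prop} {s : Cycle α}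
    (hnd : s.Nodup) (hch : s.Chain r) {a c d : α} (ha : a ∈ s) (hc : c ∉ s) (hd : d ∉ s)
    (hcd_ne : c ≠ d) (hrc : ∀ x ∈ s, r x c) (hcd : r c d) (hdr : ∀ x ∈ s, r d x) :
    ∃ s' : Cycle α, s'.Nodup ∧ s'.Chain r ∧ s'.length = s.length + 2 := by
  obtain ⟨t, rfl⟩ := Cycle.exists_eq_cons_of_mem ha
  simp only [Cycle.mem_coe_iff] at hc hd hrc hdr
  refine ⟨↑(a :: (t ++ [c, d])), ?_, ?_, by simp⟩
  · rw [Cycle.nodup_coe_iff] at hnd ⊢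
    rw [← cons_append, nodup_append]
    refine ⟨hnd, by simpa using hcd_ne, fun x hx y hy hxy => ?_⟩
    obtain rfl | rfl : y = c ∨ y = d := by simpa using hy
    exacts [hc (hxy ▸ hx), hd (hxy ▸ hx)]
  · have hch' : IsChain r ((a :: t) ++ [a]) := hch
    rw [Cycle.chain_coe_cons, show a :: (t ++ [c, d] ++ [a]) = (a :: t) ++ [c, d, a] by simp]
    refine (hch'.left_of_append).append (by simp [hcd, hdr a mem_cons_self]) ?_
    rintro x hx y hy
    obtain rfl : c = y := by simpa using hy
    exact hrc x (mem_of_mem_getLast? hx)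

def IsTournament {V : Type*} (r : V → V → Prop) : Prop :=
  ∀ u v : V, u ≠ v → Xor (r u v) (r v u)

namespace IsTournament

variable {V : Type*} {r : V → V → Prop} {x y : V}

theorem not_rel_of_rel (h : IsTournament r) (hxy : x ≠ y) (hr : r x y) : ¬ r y x :=
  (h x y hxy).elim And.right fun h' => absurd hr h'.2

theorem rel_of_not_rel (h : IsTournament r) (hxy : x ≠ y) (hr : ¬ r x y) : r y x :=
  (h x y hxy).elim (fun h' => absurd h'.1 hr) And.left

theorem exists_isChain_insert (h : IsTournament r) {v d : V} :
    ∀ {c : V} {l : List V}, IsChain r (c :: (l ++ [d])) → r c v → v ∉ l →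
      (∃ y ∈ l ++ [d], r v y) → ∃ l', IsChain r (c :: (l' ++ [d])) ∧ l' ~ v :: l
  | c, [], hl, hcv, _, ⟨y, hy, hvy⟩ => by
    obtain rfl : y = d := by simpa using hy
    exact ⟨[v], by simp_all, .refl _⟩
  | c, e :: l, hl, hcv, hvl, ⟨y, hy, hvy⟩ => by
    rw [cons_append, isChain_cons_cons] at hl
    by_cases hve : r v e
    · exact ⟨v :: e :: l, by simp_all, .refl _⟩
    have hev : r e v := h.rel_of_not_rel (fun hve' => hvl (hve' ▸ mem_cons_self)) hve
    have hy' : y ∈ l ++ [d] := by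
      rcases mem_cons.1 hy with rfl | hy'
      · exact absurd hvy hve
      · exact hy'
    obtain ⟨l', hl', hperm⟩ :=
      h.exists_isChain_insert hl.2 hev (fun hv => hvl (mem_cons_of_mem e hv)) ⟨y, hy', hvy⟩
    exact ⟨e :: l', isChain_cons_cons.2 ⟨hl.1, hl'⟩, (hperm.cons e).trans (.swap v e l)⟩

theorem exists_cycle_insert (h : IsTournament r) {s : Cycle V} (hnd : s.Nodup) (hch : s.Chain r)
    {v x y : V} (hv : v ∉ s) (hx : x ∈ s) (hxv : r x v) (hy : y ∈ s) (hvy : r v y) :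
    ∃ s' : Cycle V, s'.Nodup ∧ s'.Chain r ∧ s'.length = s.length + 1 := by
  obtain ⟨t, rfl⟩ := Cycle.exists_eq_cons_of_mem hx
  rw [Cycle.mem_coe_iff] at hv hy
  rw [Cycle.nodup_coe_iff] at hnd
  have hyt : y ∈ t ++ [x] := by
    rcases mem_cons.1 hy with rfl | hyt
    · exact absurd hvy (h.not_rel_of_rel (fun e => hv (e ▸ mem_cons_self)) hxv)
    · exact mem_append_left _ hyt
  obtain ⟨t', hch', hperm⟩ :=
    h.exists_isChain_insert hch hxv (fun hvt => hv (mem_cons_of_mem x hvt)) ⟨y, hyt, hvy⟩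
  have hperm' : x :: t' ~ v :: x :: t := (hperm.cons x).trans (.swap v x t)
  exact ⟨↑(x :: t'), Cycle.nodup_coe_iff.2 (hperm'.nodup_iff.2 (nodup_cons.2 ⟨hv, hnd⟩)), hch',
    by simp [hperm.length_eq]⟩

theorem exists_dominated_rel_dominating (h : IsTournament r)
    (hsc : ∀ u v : V, Relation.ReflTransGen r u v) {S : Set V} {a v : V} (ha : a ∈ S) (hv : v ∉ S)
    (hS : ∀ u ∉ S, ∀ x ∈ S, ∀ y ∈ S, r x u → ¬ r u y) :
    ∃ c d, c ∉ S ∧ d ∉ S ∧ c ≠ d ∧ (∀ x ∈ S, r x c) ∧ r c d ∧ ∀ x ∈ S, r d x := by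
  obtain ⟨c₀, d₀, hc₀, hd₀, hcd₀⟩ := (hsc a v).exists_rel_crossing (p := (· ∈ S)) ha hv
  have hd₀W : d₀ ∉ S ∧ ∀ x ∈ S, r x d₀ := ⟨hd₀, fun x hx =>
    h.rel_of_not_rel (ne_of_mem_of_not_mem hx hd₀).symm (hS d₀ hd₀ c₀ hc₀ x hx hcd₀)⟩
  obtain ⟨c, d, hcW, hdW, hcd⟩ := (hsc d₀ a).exists_rel_crossing
    (p := fun u => u ∉ S ∧ ∀ x ∈ S, r x u) hd₀W (fun haW => haW.1 ha)
  have hdS : d ∉ S := fun hdS =>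
    h.not_rel_of_rel (ne_of_mem_of_not_mem hdS hcW.1) (hcW.2 d hdS) hcd
  obtain ⟨x₀, hx₀, hdx₀⟩ : ∃ x₀ ∈ S, r d x₀ := by
    by_contra! hno
    exact hdW ⟨hdS, fun x hx => h.rel_of_not_rel (ne_of_mem_of_not_mem hx hdS).symm (hno x hx)⟩
  refine ⟨c, d, hcW.1, hdS, fun e => hdW (e ▸ hcW), hcW.2, hcd, fun x hx => ?_⟩
  exact h.rel_of_not_rel (ne_of_mem_of_not_mem hx hdS) fun hxd => hS d hdS x hx x₀ hx₀ hxd hdx₀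

theorem exists_longer_cycle (h : IsTournament r) (hsc : ∀ u v : V, Relation.ReflTransGen r u v)
    {s : Cycle V} (hnd : s.Nodup) (hch : s.Chain r) (hne : s ≠ Cycle.nil) {v : V} (hv : v ∉ s) :
    ∃ s' : Cycle V, s'.Nodup ∧ s'.Chain r ∧ s.length < s'.length := by
  by_cases hins : ∃ u ∉ s, ∃ x ∈ s, ∃ y ∈ s, r x u ∧ r u y
  · obtain ⟨u, hu, x, hx, y, hy, hxu, huy⟩ := hins
    obtain ⟨s', hnd', hch', hlen⟩ := h.exists_cycle_insert hnd hch hu hx hxu hy huy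
    exact ⟨s', hnd', hch', by omega⟩
  · push Not at hins
    obtain ⟨a, ha⟩ := Cycle.exists_mem_of_ne_nil hne
    obtain ⟨c, d, hc, hd, hcd_ne, hrc, hcd, hdr⟩ :=
      h.exists_dominated_rel_dominating hsc (S := {u | u ∈ s}) ha hv hins
    obtain ⟨s', hnd', hch', hlen⟩ :=
      Cycle.exists_nodup_chain_length_add_two hnd hch ha hc hd hcd_ne hrc hcd hdr
    exact ⟨s', hnd', hch', by omega⟩

theorem exists_hamiltonian_cycle [Fintype V] (h : IsTournament r)
    (hsc : ∀ u v : V, Relation.ReflTransGen r u v) {s : Cycle V} (hnd : s.Nodup) (hch : s.Chain r)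
    (hne : s ≠ Cycle.nil) : ∃ s' : Cycle V, s'.Nodup ∧ s'.Chain r ∧ ∀ v, v ∈ s' := by
  by_cases hall : ∀ v, v ∈ s
  · exact ⟨s, hnd, hch, hall⟩
  push Not at hall
  obtain ⟨v, hv⟩ := hall
  obtain ⟨s', hnd', hch', hlt⟩ := h.exists_longer_cycle hsc hnd hch hne hv
  have := hnd'.length_le_card
  exact h.exists_hamiltonian_cycle hsc hnd' hch' (by rintro rfl; simp at hlt)
termination_by Fintype.card V - s.length

theorem exists_cycle_length_three [Nontrivial V] (h : IsTournament r)
    (hsc : ∀ u v : V, Relation.ReflTransGen r u v) :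
    ∃ s : Cycle V, s.Nodup ∧ s.Chain r ∧ s.length = 3 := by
  obtain ⟨x, y, hxy⟩ := exists_pair_ne V
  obtain ⟨u, w, huw, huw'⟩ : ∃ u w, u ≠ w ∧ r u w :=
    (h x y hxy).elim (fun h' => ⟨x, y, hxy, h'.1⟩) (fun h' => ⟨y, x, hxy.symm, h'.1⟩)
  obtain ⟨a, b, ha, hb, hab⟩ := (hsc w u).exists_rel_crossing (p := fun z => z = w ∨ r w z)
    (Or.inl rfl) (by rintro (rfl | hwu) <;> [exact huw rfl; exact h.not_rel_of_rel huw huw' hwu])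
  push Not at hb
  have hbw : r b w := h.rel_of_not_rel hb.1.symm hb.2
  have haw : a ≠ w := by rintro rfl; exact hb.2 hab
  have hwa : r w a := ha.resolve_left haw
  have hab_ne : a ≠ b := by rintro rfl; exact hb.2 hwa
  refine ⟨↑[w, a, b], ?_, by simp [hwa, hab, hbw], rfl⟩
  simp [Cycle.nodup_coe_iff, haw.symm, hb.1.symm, hab_ne]

end IsTournament

/-- Moon's theorem: every strongly connected tournament on at least 3 vertices
has a Hamiltonian cycle. -/
theorem stmt_1 {V : Type*} [Fintype V] (r : V → V → Prop)
    (htourn : ∀ u v : V, u ≠ v → Xor' (r u v) (r v u))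
    (hsc : ∀ u v : V, Relation.ReflTransGen r u v)
    (hcard : 3 ≤ Fintype.card V) :
    ∃ l : List V, l.Nodup ∧ (∀ v : V, v ∈ l) ∧
      List.Chain' r (l ++ l.take 1) := by
  have : Nontrivial V := Fintype.one_lt_card_iff_nontrivial.1 (by omega)
  obtain ⟨s₀, hnd₀, hch₀, hlen₀⟩ := IsTournament.exists_cycle_length_three htourn hsc
  obtain ⟨s, hnd, hch, hmem⟩ :=
    IsTournament.exists_hamiltonian_cycle htourn hsc hnd₀ hch₀ (by rintro rfl; simp at hlen₀)
  induction s using Quotient.inductionOn' with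
  | h l => exact ⟨l, Cycle.nodup_coe_iff.1 hnd, fun v => Cycle.mem_coe_iff.1 (hmem v),
      (Cycle.chain_coe_iff_isChain l).1 hch⟩
end

section
/- If all n voters report the same relative order on a subset S of alternatives (voter-unanimity on S), then the ranked pairs procedure applied to the weighted majority graph outputs an ordering that agrees with this common order on S. Formally: every edge between elements of S consistent with the common order has weight n, the set of weight-n edges forms an acyclic subgraph, and ranked pairs processes all weight-n edges before any edge of weight less than n, so the transitive closure fixed by these edges orders S according to the common order. -/
open scoped Classical

/-- One step of the ranked pairs procedure: accept the edge `e = (u,v)`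
(adding `u ≺ v`) unless `v` already precedes `u` in the transitive closure of
the previously accepted edges. -/
noncomputable def rpStep {A : Type*} (R : A → A → Prop) (e : A × A) :
    A → A → Prop :=
  if Relation.TransGen R e.2 e.1 then R
  else fun a b => R a b ∨ (a = e.1 ∧ b = e.2)

/-- The set of edges accepted by ranked pairs after processing the edge list
`l` (in order). -/
noncomputable def rpAccepted {A : Type*} (l : List (A × A)) : A → A → Prop :=
  l.foldl rpStep (fun _ _ => False)

/-- The number of voters ranking `u` before `v`. -/
noncomputable def voteWeight {A : Type*} {n : ℕ} (votes : Fin n → A → A → Prop)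
    (u v : A) : ℕ :=
  Nat.card {i : Fin n // votes i u v}

/-!
An edge has the maximal weight `n` exactly when it is unanimous, so every weight-`n` edge lies
in the (strict, hence acyclic) order of any single voter. Ranked pairs never rejects an edge of an
acyclic relation `P` as long as it has accepted nothing outside `P`; since the weight-`n` edges are
processed first, all of them are accepted, in particular the unanimous edges inside `S`.
-/

open Relation

section RankedPairs

variable {A : Type*}

theorem rpStep_of_rel {R : A → A → Prop} (e : A × A) {a b : A} (h : R a b) :
    rpStep R e a b := by
  unfold rpStep
  split
  · exact h
  · exact Or.inl h

theorem foldl_rpStep_of_rel (l : List (A × A)) {R : A → A → Prop} {a b : A} (h : R a b) :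
    l.foldl rpStep R a b := by
  induction l generalizing R with
  | nil => exact h
  | cons e t ih => exact ih (rpStep_of_rel e h)

theorem rpStep_self {R : A → A → Prop} {u v : A} (h : ¬ TransGen R v u) :
    rpStep R (u, v) u v := by
  rw [rpStep, if_neg h]
  exact Or.inr ⟨rfl, rfl⟩

theorem rel_of_rpStep {R P : A → A → Prop} (hR : ∀ a b, R a b → P a b) {e : A × A}
    (he : P e.1 e.2) {a b : A} (h : rpStep R e a b) : P a b := by
  unfold rpStep at h
  split at h
  · exact hR a b h
  · rcases h with h | ⟨rfl, rfl⟩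
    · exact hR a b h
    · exact he

theorem foldl_rpStep_of_acyclic {P : A → A → Prop} (hP : ∀ x, ¬ TransGen P x x)
    (l : List (A × A)) (hl : l.Pairwise fun e e' => P e'.1 e'.2 → P e.1 e.2)
    {R : A → A → Prop} (hR : ∀ a b, R a b → P a b)
    {u v : A} (huv : (u, v) ∈ l) (hPuv : P u v) :
    l.foldl rpStep R u v := by
  induction l generalizing R with
  | nil => simp at huv
  | cons e t ih =>
    obtain ⟨hhead, htail⟩ := List.pairwise_cons.mp hl
    rw [List.foldl_cons]
    rcases List.mem_cons.mp huv with rfl | huv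
    · -- a path `v ⟶ u` of accepted edges would close a `P`-cycle with `u ⟶ v`
      have hfree : ¬ TransGen R v u := fun hvu =>
        hP u (TransGen.head hPuv (TransGen.mono hR _ _ hvu))
      exact foldl_rpStep_of_rel t (rpStep_self hfree)
    · exact ih htail (fun a b => rel_of_rpStep hR (hhead _ huv hPuv)) huv

theorem rpAccepted_of_acyclic {P : A → A → Prop} (hP : ∀ x, ¬ TransGen P x x)
    {l : List (A × A)} (hl : l.Pairwise fun e e' => P e'.1 e'.2 → P e.1 e.2)
    {u v : A} (huv : (u, v) ∈ l) (hPuv : P u v) :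
    rpAccepted l u v :=
  foldl_rpStep_of_acyclic hP l hl (fun _ _ h => h.elim) huv hPuv

end RankedPairs

theorem not_transGen_self_of_le_strictOrder {A : Type*} {P r : A → A → Prop}
    [IsStrictOrder A r] (h : ∀ a b, P a b → r a b) (x : A) : ¬ TransGen P x x := fun hx =>
  irrefl_of r x (transGen_eq_self (r := r) ▸ TransGen.mono h _ _ hx)

section VoteWeight

variable {A : Type*} {n : ℕ} (votes : Fin n → A → A → Prop)

theorem voteWeight_le (u v : A) : voteWeight votes u v ≤ n :=
  (Finite.card_subtype_le _).trans_eq (Nat.card_fin n)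

theorem voteWeight_eq_iff {u v : A} : voteWeight votes u v = n ↔ ∀ i, votes i u v := by
  refine ⟨fun h i => by_contra fun hi => ?_, fun h => ?_⟩
  · exact (Finite.card_subtype_lt (p := (votes · u v)) hi).ne (h.trans (Nat.card_fin n).symm)
  · exact (Nat.card_congr (Equiv.subtypeUnivEquiv h)).trans (Nat.card_fin n)

theorem voteWeight_eq_of_le {e e' : A × A}
    (he : voteWeight votes e'.1 e'.2 ≤ voteWeight votes e.1 e.2)
    (he' : voteWeight votes e'.1 e'.2 = n) : voteWeight votes e.1 e.2 = n :=
  le_antisymm (voteWeight_le votes _ _) (he'.symm.trans_le he)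

end VoteWeight

theorem stmt_8_general {A : Type*} {n : ℕ} (hn : 0 < n)
    (votes : Fin n → A → A → Prop)
    (hlin : ∀ i, IsStrictTotalOrder A (votes i))
    (S : Set A) (σ : A → A → Prop)
    (hσirr : ∀ u, ¬ σ u u)
    (hunan : ∀ u ∈ S, ∀ v ∈ S, (σ u v ↔ ∀ i, votes i u v))
    (l : List (A × A))
    (hcomplete : ∀ u v : A, u ≠ v → (u, v) ∈ l)
    (hsorted : l.Pairwise (fun e e' => voteWeight votes e'.1 e'.2 ≤
      voteWeight votes e.1 e.2)) :
    (∀ u ∈ S, ∀ v ∈ S, σ u v → voteWeight votes u v = n) ∧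
    (∀ x : A, ¬ Relation.TransGen (fun a b => voteWeight votes a b = n) x x) ∧
    (∀ u ∈ S, ∀ v ∈ S, σ u v → Relation.TransGen (rpAccepted l) u v) := by
  have hweight : ∀ u ∈ S, ∀ v ∈ S, σ u v → voteWeight votes u v = n := fun u hu v hv huv =>
    (voteWeight_eq_iff votes).2 ((hunan u hu v hv).1 huv)
  have i₀ : Fin n := ⟨0, hn⟩
  have hacyclic : ∀ x : A, ¬ TransGen (fun a b => voteWeight votes a b = n) x x :=
    have := hlin i₀
    not_transGen_self_of_le_strictOrder fun a b h => (voteWeight_eq_iff votes).1 h i₀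
  refine ⟨hweight, hacyclic, fun u hu v hv huv => TransGen.single ?_⟩
  have hne : u ≠ v := by rintro rfl; exact hσirr u huv
  exact rpAccepted_of_acyclic hacyclic (hsorted.imp (voteWeight_eq_of_le votes))
    (hcomplete u v hne) (hweight u hu v hv huv)

/-- Proposition 1: if all `n` voters agree on the relative order `σ` of the
elements of `S`, then (i) every `σ`-consistent edge inside `S` has weight `n`,
(ii) the weight-`n` edges form an acyclic subgraph, and (iii) ranked pairs,
processing the edges in nonincreasing order of weight, outputs an ordering
that agrees with `σ` on `S`. -/
theorem stmt_8 {A : Type*} [Fintype A] {n : ℕ} (hn : 0 < n)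
    (votes : Fin n → A → A → Prop)
    (hlin : ∀ i, IsStrictTotalOrder A (votes i))
    (S : Set A) (σ : A → A → Prop)
    (hσtot : ∀ u ∈ S, ∀ v ∈ S, u ≠ v → σ u v ∨ σ v u)
    (hσirr : ∀ u, ¬ σ u u)
    (hunan : ∀ u ∈ S, ∀ v ∈ S, (σ u v ↔ ∀ i, votes i u v))
    (l : List (A × A))
    (hcomplete : ∀ u v : A, u ≠ v → (u, v) ∈ l)
    (hsorted : l.Pairwise (fun e e' => voteWeight votes e'.1 e'.2 ≤
      voteWeight votes e.1 e.2)) :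
    (∀ u ∈ S, ∀ v ∈ S, σ u v → voteWeight votes u v = n) ∧
    (∀ x : A, ¬ Relation.TransGen (fun a b => voteWeight votes a b = n) x x) ∧
    (∀ u ∈ S, ∀ v ∈ S, σ u v → Relation.TransGen (rpAccepted l) u v) :=
  stmt_8_general hn votes hlin S σ hσirr hunan l hcomplete hsorted
end
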